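/- arXiv:2503.08623 — 8 statements merged into one kernel-verified Lean document; each statement's English description precedes it below -/
import Mathlib

section
/- Hardy's nonlocality argument for two qubits: Let (Ω, μ) be a probability space and let A₁, A₂, B₁, B₂ : Ω → {−1, +1} be measurable functions (a local hidden variable model for Hardy's test). If μ({A₁ = +1} ∩ {B₁ = +1}) = 0, μ({A₂ = +1} ∩ {B₁ = −1}) = 0, and μ({A₁ = −1} ∩ {B₂ = +1}) = 0, then μ({A₂ = +1} ∩ {B₂ = +1}) = 0. -/
open MeasureTheory

/-!
A hidden variable with `A₂ = B₂ = +1` violates one of the three Hardy constraints: if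
`B₁ = -1` the second, otherwise the first or the third according to the value of `A₁`.
So the Hardy event is covered by a union of three null sets.
-/

theorem hardy_event_subset_union {Ω : Type*} (A₁ A₂ B₁ B₂ : Ω → ℝ)
    (hA₁v : ∀ ω, A₁ ω = 1 ∨ A₁ ω = -1) (hB₁v : ∀ ω, B₁ ω = 1 ∨ B₁ ω = -1) :
    {ω | A₂ ω = 1} ∩ {ω | B₂ ω = 1} ⊆
      ({ω | A₁ ω = 1} ∩ {ω | B₁ ω = 1}) ∪ ({ω | A₂ ω = 1} ∩ {ω | B₁ ω = -1}) ∪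
        ({ω | A₁ ω = -1} ∩ {ω | B₂ ω = 1}) := by
  rintro ω ⟨hA₂, hB₂⟩
  rcases hB₁v ω with hB₁ | hB₁
  · rcases hA₁v ω with hA₁ | hA₁
    · exact .inl (.inl ⟨hA₁, hB₁⟩)
    · exact .inr ⟨hA₁, hB₂⟩
  · exact .inl (.inr ⟨hA₂, hB₁⟩)

theorem hardy_lhv_probability_zero_general {Ω : Type*} [MeasurableSpace Ω]
    (μ : Measure Ω)
    (A₁ A₂ B₁ B₂ : Ω → ℝ)
    (hA₁v : ∀ ω, A₁ ω = 1 ∨ A₁ ω = -1)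
    (hB₁v : ∀ ω, B₁ ω = 1 ∨ B₁ ω = -1)
    (h1 : μ ({ω | A₁ ω = 1} ∩ {ω | B₁ ω = 1}) = 0)
    (h2 : μ ({ω | A₂ ω = 1} ∩ {ω | B₁ ω = -1}) = 0)
    (h3 : μ ({ω | A₁ ω = -1} ∩ {ω | B₂ ω = 1}) = 0) :
    μ ({ω | A₂ ω = 1} ∩ {ω | B₂ ω = 1}) = 0 :=
  measure_mono_null (hardy_event_subset_union A₁ A₂ B₁ B₂ hA₁v hB₁v)
    (measure_union_null (measure_union_null h1 h2) h3)

/-- Hardy's nonlocality argument for two qubits: in any local hidden variable model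
(probability space with four measurable ±1-valued random variables), if the three
Hardy constraints hold with probability zero, then the Hardy event `A₂ = +1 ∧ B₂ = +1`
also has probability zero. -/
theorem hardy_lhv_probability_zero {Ω : Type*} [MeasurableSpace Ω]
    (μ : Measure Ω) [IsProbabilityMeasure μ]
    (A₁ A₂ B₁ B₂ : Ω → ℝ)
    (hA₁ : Measurable A₁) (hA₂ : Measurable A₂)
    (hB₁ : Measurable B₁) (hB₂ : Measurable B₂)
    (hA₁v : ∀ ω, A₁ ω = 1 ∨ A₁ ω = -1) (hA₂v : ∀ ω, A₂ ω = 1 ∨ A₂ ω = -1)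
    (hB₁v : ∀ ω, B₁ ω = 1 ∨ B₁ ω = -1) (hB₂v : ∀ ω, B₂ ω = 1 ∨ B₂ ω = -1)
    (h1 : μ ({ω | A₁ ω = 1} ∩ {ω | B₁ ω = 1}) = 0)
    (h2 : μ ({ω | A₂ ω = 1} ∩ {ω | B₁ ω = -1}) = 0)
    (h3 : μ ({ω | A₁ ω = -1} ∩ {ω | B₂ ω = 1}) = 0) :
    μ ({ω | A₂ ω = 1} ∩ {ω | B₂ ω = 1}) = 0 :=
  hardy_lhv_probability_zero_general μ A₁ A₂ B₁ B₂ hA₁v hB₁v h1 h2 h3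
end

section
/- Maximum of Hardy's probability for two qubits: define q(θ, φ) = (sin²θ · cos²θ · sin²φ · cos²φ) / (cos²θ + sin²θ · cos²φ) for θ, φ ∈ (0, π/2). Then q(θ, φ) ≤ (5√5 − 11)/2 for all θ, φ ∈ (0, π/2), and equality holds whenever cos(2θ) = cos(2φ) = 2 − √5; in particular the supremum of q over (0, π/2)² equals q_max = (5√5 − 11)/2 ≈ 0.09017. -/
/-- Hardy's probability for the two-qubit state of the Hardy test, as a function of
the state parameters θ and φ. -/
noncomputable def hardyQ (θ φ : ℝ) : ℝ :=
  (Real.sin θ ^ 2 * Real.cos θ ^ 2 * Real.sin φ ^ 2 * Real.cos φ ^ 2) /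
    (Real.cos θ ^ 2 + Real.sin θ ^ 2 * Real.cos φ ^ 2)

lemma hardy_key {c d : ℝ} (hc0 : 0 < c) (hc1 : c < 1) (hd0 : 0 < d) (hd1 : d < 1) :
    (1-c)*c*(1-d)*d / (c + (1-c)*d) ≤ (5*Real.sqrt 5 - 11)/2 := by
  set s := Real.sqrt 5 with hsdef
  have hs : s ^ 2 = 5 := Real.sq_sqrt (by norm_num)
  have h2 : (2:ℝ) < s := by nlinarith [Real.sqrt_nonneg 5]
  have h3 : s < 3 := by nlinarith [Real.sqrt_nonneg 5]
  have hK : (0:ℝ) < (5*s - 11)/2 := by nlinarith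
  have hden : 0 < c + (1-c)*d := by nlinarith
  rw [div_le_iff₀ hden]
  have hA : 0 ≤ ((c+d)/2) * ((c+d)/2 - (3-s)/2)^2 * ((s-1) - (c+d)/2) := by
    apply mul_nonneg (mul_nonneg (by linarith) (sq_nonneg _))
    nlinarith
  have hB : 0 ≤ ((5*s - 11)/2) * ((c-d)^2/4) := by positivity
  have hC : 0 ≤ ((c-d)^2/4) * ((1-c)*(1-d) + (c+d)^2/4) := by
    apply mul_nonneg (by positivity)
    nlinarith [mul_pos (sub_pos.2 hc1) (sub_pos.2 hd1)]
  nlinarith [hA, hB, hC, hs]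

lemma hardyQ_upper {θ φ : ℝ} (hθ : θ ∈ Set.Ioo (0 : ℝ) (Real.pi / 2))
    (hφ : φ ∈ Set.Ioo (0 : ℝ) (Real.pi / 2)) :
    hardyQ θ φ ≤ (5 * Real.sqrt 5 - 11) / 2 := by
  have hcθ : 0 < Real.cos θ := Real.cos_pos_of_mem_Ioo ⟨by linarith [hθ.1, Real.pi_pos], hθ.2⟩
  have hsθ : 0 < Real.sin θ := Real.sin_pos_of_pos_of_lt_pi hθ.1 (by linarith [hθ.2, Real.pi_pos])
  have hcφ : 0 < Real.cos φ := Real.cos_pos_of_mem_Ioo ⟨by linarith [hφ.1, Real.pi_pos], hφ.2⟩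
  have hsφ : 0 < Real.sin φ := Real.sin_pos_of_pos_of_lt_pi hφ.1 (by linarith [hφ.2, Real.pi_pos])
  have pθ : Real.sin θ ^ 2 + Real.cos θ ^ 2 = 1 := Real.sin_sq_add_cos_sq θ
  have pφ : Real.sin φ ^ 2 + Real.cos φ ^ 2 = 1 := Real.sin_sq_add_cos_sq φ
  have key := hardy_key (c := Real.cos θ ^ 2) (d := Real.cos φ ^ 2)
    (by positivity) (by nlinarith) (by positivity) (by nlinarith)
  unfold hardyQ
  calc Real.sin θ ^ 2 * Real.cos θ ^ 2 * Real.sin φ ^ 2 * Real.cos φ ^ 2 /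
      (Real.cos θ ^ 2 + Real.sin θ ^ 2 * Real.cos φ ^ 2)
      = (1 - Real.cos θ ^ 2) * Real.cos θ ^ 2 * (1 - Real.cos φ ^ 2) * Real.cos φ ^ 2 /
        (Real.cos θ ^ 2 + (1 - Real.cos θ ^ 2) * Real.cos φ ^ 2) := by
        rw [show Real.sin θ ^ 2 = 1 - Real.cos θ ^ 2 by linarith,
            show Real.sin φ ^ 2 = 1 - Real.cos φ ^ 2 by linarith]
    _ ≤ (5 * Real.sqrt 5 - 11) / 2 := key

lemma hardyQ_eq {θ φ : ℝ}
    (h1 : Real.cos (2 * θ) = 2 - Real.sqrt 5) (h2 : Real.cos (2 * φ) = 2 - Real.sqrt 5) :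
    hardyQ θ φ = (5 * Real.sqrt 5 - 11) / 2 := by
  set s := Real.sqrt 5 with hsdef
  have hs : s ^ 2 = 5 := Real.sq_sqrt (by norm_num)
  have h2' : (2:ℝ) < s := by nlinarith [Real.sqrt_nonneg 5]
  have h3' : s < 3 := by nlinarith [Real.sqrt_nonneg 5]
  have hcθ : Real.cos θ ^ 2 = (3 - s) / 2 := by
    have := Real.cos_two_mul θ; rw [h1] at this; linarith
  have hcφ : Real.cos φ ^ 2 = (3 - s) / 2 := by
    have := Real.cos_two_mul φ; rw [h2] at this; linarith
  have hsθ : Real.sin θ ^ 2 = (s - 1) / 2 := by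
    have := Real.sin_sq_add_cos_sq θ; rw [hcθ] at this; linarith
  have hsφ : Real.sin φ ^ 2 = (s - 1) / 2 := by
    have := Real.sin_sq_add_cos_sq φ; rw [hcφ] at this; linarith
  unfold hardyQ
  rw [hcθ, hcφ, hsθ, hsφ]
  have hD : (3 - s) / 2 + (s - 1) / 2 * ((3 - s) / 2) = (s - 1) / 2 := by
    linear_combination (-(1:ℝ)/4) * hs
  rw [hD, div_eq_iff (ne_of_gt (by linarith : (0:ℝ) < (s - 1) / 2))]
  linear_combination ((s^2 - 8*s + 7)/16) * hs

/-- Maximum of Hardy's probability for two qubits: q(θ, φ) ≤ (5√5 − 11)/2 on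
(0, π/2)², with equality whenever cos 2θ = cos 2φ = 2 − √5; hence the supremum of q
over (0, π/2)² is q_max = (5√5 − 11)/2. -/
theorem hardyQ_max :
    (∀ θ ∈ Set.Ioo (0 : ℝ) (Real.pi / 2), ∀ φ ∈ Set.Ioo (0 : ℝ) (Real.pi / 2),
      hardyQ θ φ ≤ (5 * Real.sqrt 5 - 11) / 2) ∧
    (∀ θ ∈ Set.Ioo (0 : ℝ) (Real.pi / 2), ∀ φ ∈ Set.Ioo (0 : ℝ) (Real.pi / 2),
      Real.cos (2 * θ) = 2 - Real.sqrt 5 → Real.cos (2 * φ) = 2 - Real.sqrt 5 →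
      hardyQ θ φ = (5 * Real.sqrt 5 - 11) / 2) ∧
    sSup ((fun p : ℝ × ℝ => hardyQ p.1 p.2) ''
        (Set.Ioo (0 : ℝ) (Real.pi / 2) ×ˢ Set.Ioo (0 : ℝ) (Real.pi / 2)))
      = (5 * Real.sqrt 5 - 11) / 2 := by
  have hs : Real.sqrt 5 ^ 2 = 5 := Real.sq_sqrt (by norm_num)
  have h2 : (2:ℝ) < Real.sqrt 5 := by nlinarith [Real.sqrt_nonneg 5]
  have h3 : Real.sqrt 5 < 3 := by nlinarith [Real.sqrt_nonneg 5]
  refine ⟨fun θ hθ φ hφ => hardyQ_upper hθ hφ,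
    fun θ _ φ _ h1 h2 => hardyQ_eq h1 h2, ?_⟩
  apply IsGreatest.csSup_eq
  constructor
  · -- membership
    set θ0 := Real.arccos (2 - Real.sqrt 5) / 2 with hθ0
    have hmem : θ0 ∈ Set.Ioo (0 : ℝ) (Real.pi / 2) := by
      have ha : 0 < Real.arccos (2 - Real.sqrt 5) := Real.arccos_pos.2 (by linarith)
      have hb : Real.arccos (2 - Real.sqrt 5) < Real.pi :=
        (Real.arccos_le_pi _).lt_of_ne (fun h => by
          have := Real.arccos_eq_pi.1 h; linarith)
      rw [hθ0]
      constructor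
      · linarith
      · linarith
    have hcos : Real.cos (2 * θ0) = 2 - Real.sqrt 5 := by
      rw [hθ0, mul_div_cancel₀ _ (two_ne_zero)]
      exact Real.cos_arccos (by linarith) (by linarith)
    exact ⟨(θ0, θ0), Set.mk_mem_prod hmem hmem, hardyQ_eq hcos hcos⟩
  · rintro x ⟨⟨θ, φ⟩, ⟨hθ, hφ⟩, rfl⟩
    exact hardyQ_upper hθ hφ
end

section
/- Closed form of Hardy's probability from the circuit amplitude: Let θ, φ, χ ∈ (0, π/2) be real numbers with cot χ = tan θ · cos φ. Then the squared modulus of the complex amplitude (1/2)·cosθ·cosχ·(1 − e^{−2iφ}) equals (sin²θ · cos²θ · sin²φ · cos²φ)/(cos²θ + sin²θ · cos²φ), i.e., |(1/2) cosθ cosχ (1 − e^{−2iφ})|² = q(θ, φ). -/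
/-!
The squared modulus factors as `cos²θ · cos²χ · |1 - e^{-2iφ}|² / 4`, where
`|1 - e^{-2iφ}| = 2 |sin φ|`. Squaring `cos χ cos θ = sin χ sin θ cos φ` (the relation
`cot χ = tan θ cos φ` with denominators cleared) and using `sin²χ = 1 - cos²χ` gives
`cos²χ = sin²θ cos²φ / (cos²θ + sin²θ cos²φ)`.
-/

open Real

lemma norm_one_sub_exp_neg_two_mul_I_sq (φ : ℝ) :
    ‖1 - Complex.exp (-(2 * (φ : ℂ)) * Complex.I)‖ ^ 2 = 4 * sin φ ^ 2 := by
  have h := Complex.norm_exp_I_mul_ofReal_sub_one (-(2 * φ))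
  rw [show -(2 * φ) / 2 = -φ by ring, sin_neg] at h
  push_cast at h
  rw [norm_sub_rev, mul_comm, h, norm_mul, norm_neg, Real.norm_eq_abs, mul_pow, sq_abs]
  norm_num

lemma Real.cos_sq_eq_of_cot_eq_tan_mul {θ χ a : ℝ} (hθ : cos θ ≠ 0) (hχ : sin χ ≠ 0)
    (h : cot χ = tan θ * a) :
    cos χ ^ 2 = sin θ ^ 2 * a ^ 2 / (cos θ ^ 2 + sin θ ^ 2 * a ^ 2) := by
  rw [cot_eq_cos_div_sin, tan_eq_sin_div_cos, div_eq_iff hχ] at h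
  field_simp at h
  have hD : cos θ ^ 2 + sin θ ^ 2 * a ^ 2 ≠ 0 := by positivity
  rw [eq_div_iff hD]
  linear_combination
    (cos χ * cos θ + sin χ * sin θ * a) * h + sin θ ^ 2 * a ^ 2 * sin_sq_add_cos_sq χ

theorem hardyQ_amplitude_general (θ φ χ : ℝ)
    (hθ : θ ∈ Set.Ioo (0 : ℝ) (Real.pi / 2))
    (hχ : χ ∈ Set.Ioo (0 : ℝ) (Real.pi / 2))
    (hcot : Real.cot χ = Real.tan θ * Real.cos φ) :
    ‖(1 / 2 : ℂ) * (Real.cos θ : ℂ) * (Real.cos χ : ℂ) *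
        (1 - Complex.exp (-(2 * (φ : ℂ)) * Complex.I))‖ ^ 2 = hardyQ θ φ := by
  have hcosθ : cos θ ≠ 0 := (cos_pos_of_mem_Ioo ⟨by linarith [hθ.1, pi_pos], hθ.2⟩).ne'
  have hsinχ : sin χ ≠ 0 := (sin_pos_of_pos_of_lt_pi hχ.1 (by linarith [hχ.2, pi_pos])).ne'
  calc _ = (1 / 2) ^ 2 * cos θ ^ 2 * cos χ ^ 2 *
        ‖1 - Complex.exp (-(2 * (φ : ℂ)) * Complex.I)‖ ^ 2 := by
        simp only [norm_mul, Complex.norm_real, Real.norm_eq_abs, mul_pow, sq_abs]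
        norm_num
    _ = cos θ ^ 2 * sin φ ^ 2 * cos χ ^ 2 := by
        rw [norm_one_sub_exp_neg_two_mul_I_sq]
        ring
    _ = hardyQ θ φ := by
        rw [cos_sq_eq_of_cot_eq_tan_mul hcosθ hsinχ hcot, hardyQ]
        ring

/-- Closed form of Hardy's probability from the circuit amplitude: if
cot χ = tan θ · cos φ with θ, φ, χ ∈ (0, π/2), then
|(1/2)·cos θ·cos χ·(1 − e^{−2iφ})|² = q(θ, φ). -/
theorem hardyQ_amplitude (θ φ χ : ℝ)
    (hθ : θ ∈ Set.Ioo (0 : ℝ) (Real.pi / 2))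
    (hφ : φ ∈ Set.Ioo (0 : ℝ) (Real.pi / 2))
    (hχ : χ ∈ Set.Ioo (0 : ℝ) (Real.pi / 2))
    (hcot : Real.cot χ = Real.tan θ * Real.cos φ) :
    ‖(1 / 2 : ℂ) * (Real.cos θ : ℂ) * (Real.cos χ : ℂ) *
        (1 - Complex.exp (-(2 * (φ : ℂ)) * Complex.I))‖ ^ 2 = hardyQ θ φ :=
  hardyQ_amplitude_general θ φ χ hθ hχ hcot
end

section
/- Directional limit of the measurement-angle parameter at the boundary point: for every real number ϕ with cos ϕ ≠ 0, the function r ↦ cot(r·cos ϕ) · sin(r·sin ϕ) tends to tan ϕ as r → 0 along nonzero values of r. -/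
open Filter Topology

theorem HasDerivAt.tendsto_div_self_nhdsNE {𝕜 : Type*} [NontriviallyNormedField 𝕜] {f : 𝕜 → 𝕜}
    {f' : 𝕜} (hf : HasDerivAt f f' 0) (hf₀ : f 0 = 0) :
    Tendsto (fun t => f t / t) (𝓝[≠] 0) (𝓝 f') := by
  simpa [hf₀, div_eq_inv_mul] using hasDerivAt_iff_tendsto_slope_zero.mp hf

theorem Real.tendsto_sin_mul_div_self (a : ℝ) :
    Tendsto (fun r => Real.sin (r * a) / r) (𝓝[≠] 0) (𝓝 a) := by
  refine HasDerivAt.tendsto_div_self_nhdsNE ?_ (by simp)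
  simpa using ((hasDerivAt_id (0 : ℝ)).mul_const a).sin

/-- Directional limit of the measurement-angle parameter at the boundary point: for any
direction ϕ with cos ϕ ≠ 0, the function r ↦ cot(r cos ϕ) · sin(r sin ϕ) tends to tan ϕ
as r → 0 along nonzero values of r. -/
theorem cot_mul_sin_directional_limit (ϕ : ℝ) (h : Real.cos ϕ ≠ 0) :
    Tendsto (fun r : ℝ => Real.cot (r * Real.cos ϕ) * Real.sin (r * Real.sin ϕ))
      (𝓝[≠] (0 : ℝ)) (𝓝 (Real.tan ϕ)) := by
  have hcos : Tendsto (fun r : ℝ => Real.cos (r * Real.cos ϕ)) (𝓝[≠] 0) (𝓝 1) := by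
    refine (Continuous.tendsto' ?_ 0 1 (by simp)).mono_left nhdsWithin_le_nhds
    fun_prop
  have hlim := hcos.mul <|
    (Real.tendsto_sin_mul_div_self (Real.sin ϕ)).div (Real.tendsto_sin_mul_div_self (Real.cos ϕ)) h
  rw [one_mul, ← Real.tan_eq_sin_div_cos] at hlim
  -- `x / 0 = 0` makes both sides vanish where `sin (r * cos ϕ) = 0`, so only `r ≠ 0` is needed.
  refine hlim.congr' (eventually_nhdsWithin_of_forall fun r (hr : r ≠ 0) => ?_)
  dsimp only [Pi.div_apply]
  rw [Real.cot_eq_cos_div_sin, div_div_div_cancel_right₀ hr]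
  ring
end

section
/- Upper bound on the generalized singlet fraction for distinguishable particles: let n ≥ 1 be a natural number, d > 1 a real number, and F₁, …, Fₙ nonnegative reals satisfying the monogamy relation Σⱼ Fⱼ ≤ (d − 1)/d + (1/(n + d − 1))·(Σⱼ √Fⱼ)². Then Σⱼ Fⱼ ≤ 1 + (n − 1)/d. (The proof uses the Cauchy–Schwarz estimate (Σⱼ √Fⱼ)² ≤ n·Σⱼ Fⱼ.) -/
/-- Upper bound on the generalized singlet fraction for distinguishable particles: if
the nonnegative singlet fractions F₁, …, Fₙ satisfy Kay's monogamy relation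
Σⱼ Fⱼ ≤ (d−1)/d + (Σⱼ √Fⱼ)²/(n+d−1), then Σⱼ Fⱼ ≤ 1 + (n−1)/d. -/
theorem generalized_singlet_fraction_bound
    (n : ℕ) (hn : 1 ≤ n) (d : ℝ) (hd : 1 < d)
    (F : Fin n → ℝ) (hF : ∀ j, 0 ≤ F j)
    (hmono : ∑ j, F j ≤ (d - 1) / d +
      (1 / ((n : ℝ) + d - 1)) * (∑ j, Real.sqrt (F j)) ^ 2) :
    ∑ j, F j ≤ 1 + ((n : ℝ) - 1) / d := by
  set S := ∑ j, F j with hS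
  have hn1 : (1 : ℝ) ≤ (n : ℝ) := by exact_mod_cast hn
  have hden : (0 : ℝ) < (n : ℝ) + d - 1 := by linarith
  have hd0 : (0 : ℝ) < d := by linarith
  have hCS : (∑ j, Real.sqrt (F j)) ^ 2 ≤ (n : ℝ) * S := by
    have := sq_sum_le_card_mul_sum_sq (s := (Finset.univ : Finset (Fin n)))
      (f := fun j => Real.sqrt (F j))
    simpa [Real.sq_sqrt (hF _)] using this
  have h2 : S ≤ (d - 1) / d + (1 / ((n : ℝ) + d - 1)) * ((n : ℝ) * S) := by
    refine hmono.trans ?_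
    gcongr
  have e : (d - 1) / d + 1 / ((n : ℝ) + d - 1) * ((n : ℝ) * S)
      = ((d - 1) * ((n : ℝ) + d - 1) + (n : ℝ) * S * d) / (d * ((n : ℝ) + d - 1)) := by
    field_simp
  rw [e, le_div_iff₀ (by positivity)] at h2
  have hd1 : (0 : ℝ) < d - 1 := by linarith
  have : S ≤ ((n : ℝ) + d - 1) / d := by
    rw [le_div_iff₀ hd0]
    nlinarith [h2]
  calc S ≤ ((n : ℝ) + d - 1) / d := this
    _ = 1 + ((n : ℝ) - 1) / d := by field_simp; ring
end

section
/- Maximal concurrence of the reduced spin–spin state in the Li et al. circuit: with a = (e^{iα} + e^{iβ})/(2√2), b = i(e^{iα} − e^{iβ})/(2√2) for real α, β, let ψ = a·(|00⟩ − |11⟩) + b·(|01⟩ + |10⟩), ρ = |ψ⟩⟨ψ|, and ρ̃ = (σ_y ⊗ σ_y)·ρ̄·(σ_y ⊗ σ_y), where ρ̄ is the entrywise complex conjugate and σ_y = [[0, −i], [i, 0]]. Then the 4×4 matrix ρ·ρ̃ has trace 1 and rank at most 1; equivalently its eigenvalues are {1, 0, 0, 0}, so the Wootters concurrence of ρ equals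 1. -/
/-!
For a pure state `ρ = ψ ψᴴ` the spin-flipped state is `S ρ̄ S = (S ψ̄)(S ψ̄)ᴴ`, so `ρ ρ̃` has rank
at most one, and when `S` has real entries its trace is `|ψᵀ S ψ|²`. For the circuit state,
`σ_y ⊗ σ_y` fixes `ψ`, so `ψᵀ S ψ = ψᵀ ψ = 2 (a² + b²) = e^{iα} e^{iβ}`, which has modulus one.
-/

open Kronecker Matrix

section PureState

variable {n R : Type*} [Fintype n] [CommRing R] [StarRing R]

theorem Matrix.trace_vecMulVec_star_mul_flip (S : Matrix n n R) (hS : S.map (starRingEnd R) = S)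
    (ψ : n → R) :
    trace (vecMulVec ψ (star ψ) * (S * (vecMulVec ψ (star ψ)).map (starRingEnd R) * S)) =
      star (ψ ⬝ᵥ S *ᵥ ψ) * (ψ ⬝ᵥ S *ᵥ ψ) := by
  have hconj : (vecMulVec ψ (star ψ)).map (starRingEnd R) = vecMulVec (star ψ) ψ := by
    ext i j; simp [vecMulVec_apply, starRingEnd_apply]
  have hS' (i j : n) : star (S i j) = S i j := congrFun (congrFun hS i) j
  have hstar : star ψ ⬝ᵥ S *ᵥ star ψ = star (ψ ⬝ᵥ S *ᵥ ψ) := by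
    simp [dotProduct, mulVec, star_sum, hS']
  rw [hconj, mul_vecMulVec, vecMulVec_mul (S *ᵥ _), vecMulVec_mul_vecMulVec, trace_vecMulVec,
    dotProduct_smul, hstar, smul_eq_mul, dotProduct_comm ψ (ψ ᵥ* S), ← dotProduct_mulVec]

end PureState

def sigmaY : Matrix (Fin 2) (Fin 2) ℂ := !![0, -Complex.I; Complex.I, 0]

def liState (a b : ℂ) : Fin 2 × Fin 2 → ℂ := fun p => ![![a, b], ![b, -a]] p.1 p.2

theorem sigmaY_kronecker_sigmaY_map_conj :
    (sigmaY ⊗ₖ sigmaY).map (starRingEnd ℂ) = sigmaY ⊗ₖ sigmaY := by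
  ext ⟨i, j⟩ ⟨k, l⟩
  fin_cases i <;> fin_cases j <;> fin_cases k <;> fin_cases l <;> simp [sigmaY]

theorem sigmaY_kronecker_sigmaY_mulVec_liState (a b : ℂ) :
    (sigmaY ⊗ₖ sigmaY) *ᵥ liState a b = liState a b := by
  ext ⟨i, j⟩
  fin_cases i <;> fin_cases j <;> simp [sigmaY, liState, mulVec, dotProduct, Fintype.sum_prod_type]

theorem liState_dotProduct_self (a b : ℂ) : liState a b ⬝ᵥ liState a b = 2 * (a ^ 2 + b ^ 2) := by
  simp only [liState, dotProduct, Fintype.sum_prod_type, Fin.sum_univ_two,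
    cons_val_zero, cons_val_one]
  ring

theorem star_exp_ofReal_mul_I_mul_self (θ : ℝ) :
    star (Complex.exp (θ * Complex.I)) * Complex.exp (θ * Complex.I) = 1 := by
  rw [Complex.star_def, ← Complex.normSq_eq_conj_mul_self, Complex.normSq_eq_norm_sq,
    Complex.norm_exp_ofReal_mul_I]
  norm_num

theorem sq_add_sq_of_sum_diff (u v : ℂ) :
    ((u + v) / (2 * (Real.sqrt 2 : ℂ))) ^ 2 + (Complex.I * (u - v) / (2 * (Real.sqrt 2 : ℂ))) ^ 2 =
      u * v / 2 := by
  have hsqrt : (Real.sqrt 2 : ℂ) ^ 2 = 2 := by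
    rw [← Complex.ofReal_pow, Real.sq_sqrt zero_le_two]; norm_num
  field_simp
  linear_combination (u ^ 2 + v ^ 2 - 2 * u * v) * Complex.I_sq - 2 * u * v * hsqrt

/-- Maximal concurrence of the reduced spin–spin state in the Li et al. circuit: with
a = (e^{iα}+e^{iβ})/(2√2), b = i(e^{iα}−e^{iβ})/(2√2), ψ = a(|00⟩−|11⟩)+b(|01⟩+|10⟩),
ρ = |ψ⟩⟨ψ| and ρ̃ = (σ_y⊗σ_y)·ρ̄·(σ_y⊗σ_y), the matrix ρ·ρ̃ has trace 1 and rank at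
most 1 (so its eigenvalues are {1,0,0,0} and the Wootters concurrence of ρ is 1). -/
theorem li_circuit_concurrence_one (α β : ℝ)
    (a b : ℂ)
    (ha : a = (Complex.exp ((α : ℂ) * Complex.I) + Complex.exp ((β : ℂ) * Complex.I)) /
      (2 * (Real.sqrt 2 : ℂ)))
    (hb : b = Complex.I * (Complex.exp ((α : ℂ) * Complex.I) -
      Complex.exp ((β : ℂ) * Complex.I)) / (2 * (Real.sqrt 2 : ℂ)))
    (ψ : Fin 2 × Fin 2 → ℂ)
    (hψ : ψ = fun p => ![![a, b], ![b, -a]] p.1 p.2)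
    (ρ : Matrix (Fin 2 × Fin 2) (Fin 2 × Fin 2) ℂ)
    (hρ : ρ = Matrix.of fun p q => ψ p * (starRingEnd ℂ) (ψ q))
    (σy : Matrix (Fin 2) (Fin 2) ℂ)
    (hσy : σy = !![0, -Complex.I; Complex.I, 0])
    (ρt : Matrix (Fin 2 × Fin 2) (Fin 2 × Fin 2) ℂ)
    (hρt : ρt = (σy ⊗ₖ σy) * ρ.map (starRingEnd ℂ) * (σy ⊗ₖ σy)) :
    Matrix.trace (ρ * ρt) = 1 ∧ (ρ * ρt).rank ≤ 1 := by
  obtain rfl : ψ = liState a b := hψ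
  obtain rfl : σy = sigmaY := hσy
  obtain rfl : ρ = vecMulVec (liState a b) (star (liState a b)) := hρ
  subst hρt
  refine ⟨?_, (rank_mul_le_left _ _).trans (rank_vecMulVec_le _ _)⟩
  rw [trace_vecMulVec_star_mul_flip _ sigmaY_kronecker_sigmaY_map_conj,
    sigmaY_kronecker_sigmaY_mulVec_liState, liState_dotProduct_self, ha, hb,
    sq_add_sq_of_sum_diff, mul_div_cancel₀ _ two_ne_zero, star_mul', mul_mul_mul_comm,
    star_exp_ofReal_mul_I_mul_self, star_exp_ofReal_mul_I_mul_self, one_mul]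
end

section
/- Singlet fraction of the polarization-reduced state of the proposed optical circuit: for θ ∈ ℝ, let ρ_θ = cos²θ · |01⟩⟨01| + sin²θ · |10⟩⟨10| as a 4×4 density matrix on ℂ² ⊗ ℂ². Then for every maximally entangled unit vector ψ ∈ ℂ² ⊗ ℂ² (i.e., every unit vector whose partial trace over the second factor of |ψ⟩⟨ψ| equals I₂/2), one has ⟨ψ, ρ_θ ψ⟩ ≤ 1/2, and the value 1/2 is attained by ψ = (|01⟩ + |10⟩)/√2. Hence the singlet fraction F(ρ_θ) = max_ψ ⟨ψ|ρ_θ|ψ⟩ equals 1/2 for every θ. -/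
/-- Singlet fraction of the polarization-reduced state of the proposed optical circuit:
for ρ_θ = cos²θ·|01⟩⟨01| + sin²θ·|10⟩⟨10|, every maximally entangled unit vector ψ
(one whose reduced density matrix is I₂/2) satisfies ⟨ψ|ρ_θ|ψ⟩ ≤ 1/2, and the value
1/2 is attained by ψ₀ = (|01⟩ + |10⟩)/√2; hence the singlet fraction of ρ_θ is 1/2
for every θ. -/
theorem optical_state_singlet_fraction (θ : ℝ)
    (ρ : Matrix (Fin 2 × Fin 2) (Fin 2 × Fin 2) ℂ)
    (hρ : ρ = Matrix.of fun p q =>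
      if p = ((0 : Fin 2), (1 : Fin 2)) ∧ q = ((0 : Fin 2), (1 : Fin 2)) then
        ((Real.cos θ ^ 2 : ℝ) : ℂ)
      else if p = ((1 : Fin 2), (0 : Fin 2)) ∧ q = ((1 : Fin 2), (0 : Fin 2)) then
        ((Real.sin θ ^ 2 : ℝ) : ℂ)
      else 0) :
    (∀ ψ : Fin 2 × Fin 2 → ℂ,
      (∑ p : Fin 2 × Fin 2, Complex.normSq (ψ p)) = 1 →
      (Matrix.of fun i i' : Fin 2 => ∑ j : Fin 2, ψ (i, j) * (starRingEnd ℂ) (ψ (i', j)))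
        = (1 / 2 : ℂ) • (1 : Matrix (Fin 2) (Fin 2) ℂ) →
      (∑ p : Fin 2 × Fin 2, ∑ q : Fin 2 × Fin 2,
          (starRingEnd ℂ) (ψ p) * ρ p q * ψ q).re ≤ 1 / 2) ∧
    (∃ ψ₀ : Fin 2 × Fin 2 → ℂ,
      ψ₀ = (fun p => if p = ((0 : Fin 2), (1 : Fin 2)) ∨ p = ((1 : Fin 2), (0 : Fin 2))
        then ((1 / Real.sqrt 2 : ℝ) : ℂ) else 0) ∧
      (∑ p : Fin 2 × Fin 2, Complex.normSq (ψ₀ p)) = 1 ∧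
      (Matrix.of fun i i' : Fin 2 => ∑ j : Fin 2, ψ₀ (i, j) * (starRingEnd ℂ) (ψ₀ (i', j)))
        = (1 / 2 : ℂ) • (1 : Matrix (Fin 2) (Fin 2) ℂ) ∧
      (∑ p : Fin 2 × Fin 2, ∑ q : Fin 2 × Fin 2,
          (starRingEnd ℂ) (ψ₀ p) * ρ p q * ψ₀ q) = 1 / 2) := by
  subst hρ
  constructor
  · intro ψ hnorm hme
    have h0 := congrFun (congrFun hme 0) 0
    have h1 := congrFun (congrFun hme 1) 1
    simp [Matrix.of_apply, Fin.sum_univ_two, Matrix.smul_apply, Matrix.one_apply] at h0 h1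
    have h0' : Complex.normSq (ψ (0,0)) + Complex.normSq (ψ (0,1)) = 1/2 := by
      have := congrArg Complex.re h0
      simpa [Complex.mul_conj, Complex.normSq] using this
    have h1' : Complex.normSq (ψ (1,0)) + Complex.normSq (ψ (1,1)) = 1/2 := by
      have := congrArg Complex.re h1
      simpa [Complex.mul_conj, Complex.normSq] using this
    have hval : (∑ p : Fin 2 × Fin 2, ∑ q : Fin 2 × Fin 2,
          (starRingEnd ℂ) (ψ p) * (Matrix.of fun p q =>
      if p = ((0 : Fin 2), (1 : Fin 2)) ∧ q = ((0 : Fin 2), (1 : Fin 2)) then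
        ((Real.cos θ ^ 2 : ℝ) : ℂ)
      else if p = ((1 : Fin 2), (0 : Fin 2)) ∧ q = ((1 : Fin 2), (0 : Fin 2)) then
        ((Real.sin θ ^ 2 : ℝ) : ℂ)
      else 0) p q * ψ q).re
        = Real.cos θ ^ 2 * Complex.normSq (ψ (0,1)) + Real.sin θ ^ 2 * Complex.normSq (ψ (1,0)) := by
      simp [Fintype.sum_prod_type, Fin.sum_univ_two, Prod.ext_iff, Complex.normSq_apply,
        Complex.add_re, Complex.mul_re, Complex.mul_im]
      simp [← Complex.ofReal_cos, ← Complex.ofReal_sin, ← Complex.ofReal_pow]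
      ring
    rw [hval]
    have hc : Complex.normSq (ψ (0,1)) ≤ 1/2 := by nlinarith [Complex.normSq_nonneg (ψ (0,0)), Complex.normSq_nonneg (ψ (0,1))]
    have hs : Complex.normSq (ψ (1,0)) ≤ 1/2 := by nlinarith [Complex.normSq_nonneg (ψ (1,0)), Complex.normSq_nonneg (ψ (1,1))]
    nlinarith [sq_nonneg (Real.cos θ), sq_nonneg (Real.sin θ), Real.sin_sq_add_cos_sq θ]
  · have hs2 : Real.sqrt 2 * Real.sqrt 2 = 2 := Real.mul_self_sqrt (by norm_num)
    have h : (1 / Real.sqrt 2) * (1 / Real.sqrt 2) = 1 / 2 := by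
      rw [div_mul_div_comm, one_mul, hs2]
    have hi : ((Real.sqrt 2 : ℝ) : ℂ)⁻¹ * ((Real.sqrt 2 : ℝ) : ℂ)⁻¹ = 1 / 2 := by
      have hr : (Real.sqrt 2)⁻¹ * (Real.sqrt 2)⁻¹ = 1 / 2 := by simpa [one_div] using h
      rw [← Complex.ofReal_inv, ← Complex.ofReal_mul, hr]
      norm_num
    refine ⟨_, rfl, ?_, ?_, ?_⟩
    · simp [Fintype.sum_prod_type, Fin.sum_univ_two, Prod.ext_iff, Complex.normSq_ofReal, h]
      linarith
    · ext i j
      fin_cases i <;> fin_cases j <;>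
        simp [Fin.sum_univ_two, Prod.ext_iff, Matrix.one_apply, ← Complex.ofReal_mul, h, hi] <;>
        norm_num
    · simp [Fintype.sum_prod_type, Fin.sum_univ_two, Prod.ext_iff, ← Complex.ofReal_mul,
        Complex.conj_ofReal]
      rw [mul_right_comm (((Real.sqrt 2 : ℝ) : ℂ)⁻¹) (Complex.cos ↑θ ^ 2),
        mul_right_comm (((Real.sqrt 2 : ℝ) : ℂ)⁻¹) (Complex.sin ↑θ ^ 2), hi,
        ← mul_add, Complex.cos_sq_add_sin_sq]
      norm_num
end

section
/- CKW monogamy equality for the W-class pure states arising from three indistinguishable particles: let z₁, z₂, z₃ ∈ ℂ with |z₁|² + |z₂|² + |z₃|² = 1 and let ψ = z₁|110⟩ + z₂|101⟩ + z₃|011⟩ ∈ ℂ² ⊗ ℂ² ⊗ ℂ². Let ρ_AB and ρ_AC be the partial traces of |ψ⟩⟨ψ| over the third and the second factor respectively, and for a two-qubit matrix ρ set ρ̃ = (σ_y ⊗ σ_y) ρ̄ (σ_y ⊗ σ_y). Then (i) ρ_AB·ρ̃_AB has rank at most 1 and trace 4|z₂|²|z₃|², so C²_{A|B} = 4|z₂|²|z₃|²;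 (ii) ρ_AC·ρ̃_AC has rank at most 1 and trace 4|z₁|²|z₃|², so C²_{A|C} = 4|z₁|²|z₃|²; (iii) the reduced state ρ_A of the first qubit satisfies 4·det(ρ_A) = 4|z₃|²(1 − |z₃|²). Hence C²_{A|B} + C²_{A|C} = C²_{A|BC}, i.e., the monogamy inequality holds with equality. -/
/-!
Both two-qubit marginals of `z₁|110⟩ + z₂|101⟩ + z₃|011⟩` have the shape
`ρ = |d|² |11⟩⟨11| + |v⟩⟨v|` with `v = a|10⟩ + b|01⟩`. The spin flip sends `|11⟩⟨11|` to
`|00⟩⟨00|`, which is orthogonal to the support of `ρ`, and sends `v` to `ṽ = ā|01⟩ + b̄|10⟩`;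
hence `ρρ̃ = ⟨v|ṽ⟩ |v⟩⟨ṽ|` has rank at most one and trace `|⟨v|ṽ⟩|² = 4|a|²|b|²`. The
single-qubit marginal is diagonal with entries `|z₁|² + |z₂|²` and `|z₃|²`, and the
normalisation turns the sum of the two pairwise terms into `4 det ρ_A`.
-/

open Kronecker Matrix

namespace CKW

variable {α β γ : Type*}

def reducedAB [Fintype γ] (ψ : α × β × γ → ℂ) : Matrix (α × β) (α × β) ℂ :=
  Matrix.of fun p q => ∑ k, ψ (p.1, p.2, k) * (starRingEnd ℂ) (ψ (q.1, q.2, k))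

def reducedAC [Fintype β] (ψ : α × β × γ → ℂ) : Matrix (α × γ) (α × γ) ℂ :=
  Matrix.of fun p q => ∑ j, ψ (p.1, j, p.2) * (starRingEnd ℂ) (ψ (q.1, j, q.2))

def reducedA [Fintype β] [Fintype γ] (ψ : α × β × γ → ℂ) : Matrix α α ℂ :=
  Matrix.of fun i i' => ∑ j, ∑ k, ψ (i, j, k) * (starRingEnd ℂ) (ψ (i', j, k))

def pauliY : Matrix (Fin 2) (Fin 2) ℂ := !![0, -Complex.I; Complex.I, 0]

def spinFlip (ρ : Matrix (Fin 2 × Fin 2) (Fin 2 × Fin 2) ℂ) :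
    Matrix (Fin 2 × Fin 2) (Fin 2 × Fin 2) ℂ :=
  (pauliY ⊗ₖ pauliY) * ρ.map (starRingEnd ℂ) * (pauliY ⊗ₖ pauliY)

def wState (z₁ z₂ z₃ : ℂ) : Fin 2 × Fin 2 × Fin 2 → ℂ := fun p =>
  if p = ((1 : Fin 2), (1 : Fin 2), (0 : Fin 2)) then z₁
  else if p = ((1 : Fin 2), (0 : Fin 2), (1 : Fin 2)) then z₂
  else if p = ((0 : Fin 2), (1 : Fin 2), (1 : Fin 2)) then z₃ else 0

def singleExcitation (a b : ℂ) : Fin 2 × Fin 2 → ℂ :=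
  Pi.single (1, 0) a + Pi.single (0, 1) b

def wMarginal (d a b : ℂ) : Matrix (Fin 2 × Fin 2) (Fin 2 × Fin 2) ℂ :=
  vecMulVec (Pi.single (1, 1) d) (star (Pi.single (1, 1) d)) +
    vecMulVec (singleExcitation a b) (star (singleExcitation a b))

theorem reducedAB_wState (z₁ z₂ z₃ : ℂ) : reducedAB (wState z₁ z₂ z₃) = wMarginal z₁ z₂ z₃ := by
  ext ⟨i, j⟩ ⟨k, l⟩
  fin_cases i <;> fin_cases j <;> fin_cases k <;> fin_cases l <;>
    simp [reducedAB, wState, wMarginal, singleExcitation, vecMulVec_apply,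
      Fin.sum_univ_two, Prod.ext_iff]

theorem reducedAC_wState (z₁ z₂ z₃ : ℂ) : reducedAC (wState z₁ z₂ z₃) = wMarginal z₂ z₁ z₃ := by
  ext ⟨i, j⟩ ⟨k, l⟩
  fin_cases i <;> fin_cases j <;> fin_cases k <;> fin_cases l <;>
    simp [reducedAC, wState, wMarginal, singleExcitation, vecMulVec_apply,
      Fin.sum_univ_two, Prod.ext_iff]

theorem det_reducedA_wState (z₁ z₂ z₃ : ℂ) :
    (reducedA (wState z₁ z₂ z₃)).det =
      ((Complex.normSq z₃ * (Complex.normSq z₁ + Complex.normSq z₂) : ℝ) : ℂ) := by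
  rw [det_fin_two]
  simp only [reducedA, wState, of_apply, Fin.sum_univ_two, Fin.isValue, Prod.mk.injEq, and_true,
    and_false, zero_ne_one, one_ne_zero, ↓reduceIte, ite_mul, zero_mul, mul_zero, zero_add,
    add_zero, map_zero, sub_zero, Complex.ofReal_mul, Complex.ofReal_add]
  push_cast [← Complex.mul_conj]
  ring

theorem wMarginal_mul_spinFlip (d a b : ℂ) :
    wMarginal d a b * spinFlip (wMarginal d a b) =
      vecMulVec (singleExcitation a b)
        ((2 * (starRingEnd ℂ) a * (starRingEnd ℂ) b) • singleExcitation b a) := by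
  ext ⟨i, j⟩ ⟨k, l⟩
  fin_cases i <;> fin_cases j <;> fin_cases k <;> fin_cases l <;>
    simp [wMarginal, spinFlip, pauliY, singleExcitation, mul_apply, vecMulVec_apply,
      kroneckerMap_apply, Pi.single_apply, Fintype.sum_prod_type, Fin.sum_univ_two, Prod.ext_iff,
      Complex.I_mul_I] <;> ring

theorem rank_wMarginal_mul_spinFlip_le (d a b : ℂ) :
    (wMarginal d a b * spinFlip (wMarginal d a b)).rank ≤ 1 := by
  rw [wMarginal_mul_spinFlip]
  exact rank_vecMulVec_le _ _

theorem trace_wMarginal_mul_spinFlip (d a b : ℂ) :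
    (wMarginal d a b * spinFlip (wMarginal d a b)).trace =
      ((4 * Complex.normSq a * Complex.normSq b : ℝ) : ℂ) := by
  rw [wMarginal_mul_spinFlip, trace_vecMulVec]
  push_cast
  simp only [dotProduct, singleExcitation, Pi.add_apply, Pi.single_apply, Pi.smul_apply,
    smul_eq_mul, Fintype.sum_prod_type, Fin.sum_univ_two, Fin.isValue, Prod.mk.injEq, and_true,
    and_false, zero_ne_one, one_ne_zero, ↓reduceIte, mul_ite, ite_mul, mul_zero, zero_mul,
    add_zero, zero_add, ← Complex.mul_conj]
  ring

end CKW

open CKW in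
/-- CKW monogamy equality for the W-class pure states arising from three
indistinguishable particles: for ψ = z₁|110⟩ + z₂|101⟩ + z₃|011⟩ with
|z₁|²+|z₂|²+|z₃|² = 1, (i) ρ_AB·ρ̃_AB has rank ≤ 1 and trace 4|z₂|²|z₃|²;
(ii) ρ_AC·ρ̃_AC has rank ≤ 1 and trace 4|z₁|²|z₃|²; (iii) 4·det ρ_A =
4|z₃|²(1−|z₃|²); hence C²_{A|B} + C²_{A|C} = C²_{A|BC}. -/
theorem ckw_equality_w_state (z₁ z₂ z₃ : ℂ)
    (hnorm : Complex.normSq z₁ + Complex.normSq z₂ + Complex.normSq z₃ = 1)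
    (ψ : Fin 2 × Fin 2 × Fin 2 → ℂ)
    (hψ : ψ = fun p => if p = ((1 : Fin 2), (1 : Fin 2), (0 : Fin 2)) then z₁
      else if p = ((1 : Fin 2), (0 : Fin 2), (1 : Fin 2)) then z₂
      else if p = ((0 : Fin 2), (1 : Fin 2), (1 : Fin 2)) then z₃ else 0)
    (ρAB : Matrix (Fin 2 × Fin 2) (Fin 2 × Fin 2) ℂ)
    (hρAB : ρAB = Matrix.of fun p q =>
      ∑ k : Fin 2, ψ (p.1, p.2, k) * (starRingEnd ℂ) (ψ (q.1, q.2, k)))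
    (ρAC : Matrix (Fin 2 × Fin 2) (Fin 2 × Fin 2) ℂ)
    (hρAC : ρAC = Matrix.of fun p q =>
      ∑ j : Fin 2, ψ (p.1, j, p.2) * (starRingEnd ℂ) (ψ (q.1, j, q.2)))
    (ρA : Matrix (Fin 2) (Fin 2) ℂ)
    (hρA : ρA = Matrix.of fun i i' =>
      ∑ j : Fin 2, ∑ k : Fin 2, ψ (i, j, k) * (starRingEnd ℂ) (ψ (i', j, k)))
    (σy : Matrix (Fin 2) (Fin 2) ℂ)
    (hσy : σy = !![0, -Complex.I; Complex.I, 0]) :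
    ((ρAB * ((σy ⊗ₖ σy) * ρAB.map (starRingEnd ℂ) * (σy ⊗ₖ σy))).rank ≤ 1 ∧
      Matrix.trace (ρAB * ((σy ⊗ₖ σy) * ρAB.map (starRingEnd ℂ) * (σy ⊗ₖ σy)))
        = ((4 * Complex.normSq z₂ * Complex.normSq z₃ : ℝ) : ℂ)) ∧
    ((ρAC * ((σy ⊗ₖ σy) * ρAC.map (starRingEnd ℂ) * (σy ⊗ₖ σy))).rank ≤ 1 ∧
      Matrix.trace (ρAC * ((σy ⊗ₖ σy) * ρAC.map (starRingEnd ℂ) * (σy ⊗ₖ σy)))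
        = ((4 * Complex.normSq z₁ * Complex.normSq z₃ : ℝ) : ℂ)) ∧
    (4 * ρA.det = ((4 * Complex.normSq z₃ * (1 - Complex.normSq z₃) : ℝ) : ℂ)) ∧
    (4 * Complex.normSq z₂ * Complex.normSq z₃ +
        4 * Complex.normSq z₁ * Complex.normSq z₃
      = 4 * Complex.normSq z₃ * (1 - Complex.normSq z₃)) := by
  obtain rfl : ψ = wState z₁ z₂ z₃ := hψ
  obtain rfl : ρAB = reducedAB (wState z₁ z₂ z₃) := hρAB
  obtain rfl : ρAC = reducedAC (wState z₁ z₂ z₃) := hρAC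
  obtain rfl : ρA = reducedA (wState z₁ z₂ z₃) := hρA
  obtain rfl : σy = pauliY := hσy
  have hpair : 1 - Complex.normSq z₃ = Complex.normSq z₁ + Complex.normSq z₂ := by linarith
  rw [reducedAB_wState, reducedAC_wState, det_reducedA_wState, hpair]
  refine ⟨⟨rank_wMarginal_mul_spinFlip_le _ _ _, trace_wMarginal_mul_spinFlip _ _ _⟩,
    ⟨rank_wMarginal_mul_spinFlip_le _ _ _, trace_wMarginal_mul_spinFlip _ _ _⟩, ?_, by ring⟩
  push_cast
  ring
end
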